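/- Let P(λ) = ∑_{i=0}^{k} A_i λ^i be an n×n complex matrix polynomial of odd degree k ≥ 3, let δ ∈ ℂ, let x₁ ∈ ℂ^n satisfy x₁*P(δ) = 0 and let x₂ ∈ ℂ^n satisfy P(δ)x₂ = 0. Write 𝒯_P(λ) = λ𝒯₁ − 𝒯₀ and set z₁ := (Δᴮ(δ))* x₁ and z₂ := Δ(δ) x₂. Then z₁* 𝒯₁ z₂ = x₁* P′(δ) x₂, where P′(λ) = ∑_{i=1}^{k} i A_i λ^{i−1} is the derivative of P. -/

import Mathlib

open Finset Matrix

noncomputable section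
namespace MPoly

abbrev Mat (n : ℕ) := Matrix (Fin n) (Fin n) ℂ

variable {n : ℕ}

/-- Euclidean norm of a complex vector. -/
def vecNorm {ι : Type*} [Fintype ι] (x : ι → ℂ) : ℝ :=
  Real.sqrt (∑ i, ‖x i‖ ^ 2)

/-- Spectral norm (operator norm induced by the Euclidean vector norm). -/
def specNorm {ι κ : Type*} [Fintype ι] [Fintype κ] [DecidableEq κ] (M : Matrix ι κ ℂ) : ℝ :=
  ‖LinearMap.toContinuousLinearMap (Matrix.toEuclideanLin M)‖

/-- Evaluation of the matrix polynomial `P(λ) = ∑_{i=0}^k A_i λ^i`. -/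
def Peval (k : ℕ) (A : ℕ → Mat n) (lam : ℂ) : Mat n :=
  ∑ i ∈ Finset.range (k + 1), lam ^ i • A i

/-- Derivative `P′(λ) = ∑_{i=1}^k i A_i λ^{i-1}`. -/
def Pderiv (k : ℕ) (A : ℕ → Mat n) (lam : ℂ) : Mat n :=
  ∑ i ∈ Finset.range k, (((i : ℂ) + 1) * lam ^ i) • A (i + 1)

/-- `i`-th Horner shift `P_i(λ) = ∑_{j=0}^i λ^j A_{k-i+j}`. -/
def horner (k : ℕ) (A : ℕ → Mat n) (i : ℕ) (lam : ℂ) : Mat n :=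
  ∑ j ∈ Finset.range (i + 1), lam ^ j • A (k - i + j)

/-- `P^i(λ) = ∑_{j=0}^i λ^j A_j`. -/
def lowPart (A : ℕ → Mat n) (i : ℕ) (lam : ℂ) : Mat n :=
  ∑ j ∈ Finset.range (i + 1), lam ^ j • A j

/-- `q`-th (0-indexed) block of `Δ(λ)`. -/
def DeltaBlock (k : ℕ) (A : ℕ → Mat n) (lam : ℂ) (q : ℕ) : Mat n :=
  if q % 2 = 0 then lam ^ ((k - 1 - q) / 2) • (1 : Mat n)
  else lam ^ ((k - q) / 2) • horner k A q lam

/-- The kn×n matrix `Δ(λ)`. -/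
def Delta (k : ℕ) (A : ℕ → Mat n) (lam : ℂ) : Matrix (Fin k × Fin n) (Fin n) ℂ :=
  Matrix.of fun p b => DeltaBlock k A lam p.1.1 p.2 b

/-- The n×kn block-transpose `Δᴮ(λ)`. -/
def DeltaB (k : ℕ) (A : ℕ → Mat n) (lam : ℂ) : Matrix (Fin n) (Fin k × Fin n) ℂ :=
  Matrix.of fun a q => DeltaBlock k A lam q.1.1 a q.2

/-- (0-indexed) blocks of `𝒯₁`. -/
def T1Block (k : ℕ) (A : ℕ → Mat n) (i j : ℕ) : Mat n :=
  if i = j then (if i % 2 = 0 then A (k - i) else 0)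
  else if (j = i + 1 ∧ i % 2 = 1) ∨ (i = j + 1 ∧ j % 2 = 1) then 1 else 0

/-- (0-indexed) blocks of `𝒯₀`. -/
def T0Block (k : ℕ) (A : ℕ → Mat n) (i j : ℕ) : Mat n :=
  if i = j then (if i % 2 = 0 then -(A (k - i - 1)) else 0)
  else if (j = i + 1 ∧ i % 2 = 0) ∨ (i = j + 1 ∧ j % 2 = 0) then 1 else 0

/-- `𝒯₁`. -/
def TT1 (k : ℕ) (A : ℕ → Mat n) : Matrix (Fin k × Fin n) (Fin k × Fin n) ℂ :=
  Matrix.of fun p q => T1Block k A p.1.1 q.1.1 p.2 q.2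

/-- `𝒯₀`. -/
def TT0 (k : ℕ) (A : ℕ → Mat n) : Matrix (Fin k × Fin n) (Fin k × Fin n) ℂ :=
  Matrix.of fun p q => T0Block k A p.1.1 q.1.1 p.2 q.2

/-- The pencil `𝒯_P(λ) = λ𝒯₁ - 𝒯₀`. -/
def Tpencil (k : ℕ) (A : ℕ → Mat n) (lam : ℂ) : Matrix (Fin k × Fin n) (Fin k × Fin n) ℂ :=
  lam • TT1 k A - TT0 k A

/-- Block anti-diagonal flip matrix `R`. -/
def Rmat (k n : ℕ) : Matrix (Fin k × Fin n) (Fin k × Fin n) ℂ :=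
  Matrix.of fun p q => if p.1.1 + q.1.1 = k - 1 ∧ p.2 = q.2 then 1 else 0

/-- Block-diagonal sign matrix `S` (block `i` (1-indexed) is `-I` iff `i ≡ 0,1 mod 4`). -/
def Smat (k n : ℕ) : Matrix (Fin k × Fin n) (Fin k × Fin n) ℂ :=
  Matrix.of fun p q =>
    if p = q then (if (p.1.1 + 1) % 4 = 0 ∨ (p.1.1 + 1) % 4 = 1 then -1 else 1) else 0

/-- `D = diag(I, -I, I, …, I)`. -/
def Dmat (k n : ℕ) : Matrix (Fin k × Fin n) (Fin k × Fin n) ℂ :=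
  Matrix.of fun p q => if p = q then ((-1 : ℂ)) ^ p.1.1 else 0

/-- `e_k ⊗ I_n`: kn×n matrix with last block `I_n`. -/
def ekI (k n : ℕ) : Matrix (Fin k × Fin n) (Fin n) ℂ :=
  Matrix.of fun p b => if p.1.1 = k - 1 ∧ p.2 = b then 1 else 0

/-- The pencil `ℛ_P(λ) = S R 𝒯_P(λ) R S`. -/
def Rpencil (k : ℕ) (A : ℕ → Mat n) (lam : ℂ) : Matrix (Fin k × Fin n) (Fin k × Fin n) ℂ :=
  Smat k n * Rmat k n * Tpencil k A lam * Rmat k n * Smat k n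

/-- `max_{i=0:k} ‖A_i‖₂`. -/
def maxA (k : ℕ) (A : ℕ → Mat n) : ℝ :=
  (Finset.range (k + 1)).sup' Finset.nonempty_range_add_one fun i => specNorm (A i)

/-- `max_{i=0:k} max{1, ‖A_i‖₂}`. -/
def maxA1 (k : ℕ) (A : ℕ → Mat n) : ℝ :=
  (Finset.range (k + 1)).sup' Finset.nonempty_range_add_one fun i => max 1 (specNorm (A i))

/-- The quantity `d₁(δ)`. -/
def d1 (k : ℕ) (δ : ℂ) : ℝ :=
  ∑ r ∈ Finset.range ((k - 1) / 2 + 1), ‖δ‖ ^ (2 * r)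
    + ∑ r ∈ Finset.Icc 1 ((k - 1) / 2),
        ((k : ℝ) - 2 * r + 1) * ∑ s ∈ Finset.Icc r (k - r), ‖δ‖ ^ (2 * s)

/-- `ρ₁`. -/
def rho1 (k : ℕ) (A : ℕ → Mat n) : ℝ :=
  ((Finset.range (k + 1)).sup' Finset.nonempty_range_add_one fun i => max 1 (specNorm (A i) ^ 3))
    / min (specNorm (A k)) (specNorm (A 0))

/-- `ρ₂`. -/
def rho2 (k : ℕ) (A : ℕ → Mat n) : ℝ :=
  min (max 1 (specNorm (A k))) (max 1 (specNorm (A 0))) / maxA k A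

/-- `ρ′`. -/
def rho' (k : ℕ) (A : ℕ → Mat n) : ℝ :=
  ((Finset.range (k + 1)).sup' Finset.nonempty_range_add_one fun i => max 1 (specNorm (A i) ^ 2))
    / min (specNorm (A k)) (specNorm (A 0))

/-- `det P(λ)` as a polynomial in `λ`. -/
def detPoly (k : ℕ) (A : ℕ → Mat n) : Polynomial ℂ :=
  (∑ i ∈ Finset.range (k + 1), (Polynomial.X : Polynomial ℂ) ^ i • (A i).map Polynomial.C).det

/-- `L₁¹` (leading coefficient of `D₁(λ,P)`). -/
def D1L1 (k : ℕ) (A : ℕ → Mat n) : Matrix (Fin k × Fin n) (Fin k × Fin n) ℂ :=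
  Matrix.of fun p q =>
    (if p.1.1 = 0 ∧ q.1.1 = 0 then A k
     else if 1 ≤ p.1.1 ∧ 1 ≤ q.1.1 ∧ p.1.1 + q.1.1 ≤ k then -(A (k - p.1.1 - q.1.1))
     else 0) p.2 q.2

/-- `L₀¹` (trailing coefficient of `D₁(λ,P)`). -/
def D1L0 (k : ℕ) (A : ℕ → Mat n) : Matrix (Fin k × Fin n) (Fin k × Fin n) ℂ :=
  Matrix.of fun p q =>
    (if p.1.1 + q.1.1 + 1 ≤ k then -(A (k - 1 - p.1.1 - q.1.1)) else 0) p.2 q.2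

/-- `L₁ᵏ` (leading coefficient of `D_k(λ,P)`). -/
def DkL1 (k : ℕ) (A : ℕ → Mat n) : Matrix (Fin k × Fin n) (Fin k × Fin n) ℂ :=
  Matrix.of fun p q =>
    (if k - 1 ≤ p.1.1 + q.1.1 then A (2 * k - 1 - p.1.1 - q.1.1) else 0) p.2 q.2

/-- `L₀ᵏ` (trailing coefficient of `D_k(λ,P)`). -/
def DkL0 (k : ℕ) (A : ℕ → Mat n) : Matrix (Fin k × Fin n) (Fin k × Fin n) ℂ :=
  Matrix.of fun p q =>
    (if p.1.1 = k - 1 ∧ q.1.1 = k - 1 then -(A 0)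
     else if p.1.1 ≤ k - 2 ∧ q.1.1 ≤ k - 2 ∧ k - 2 ≤ p.1.1 + q.1.1
       then A (2 * k - 2 - p.1.1 - q.1.1)
     else 0) p.2 q.2

/-- `X₁` (leading coefficient of the first companion form `C₁(λ)`). -/
def C1X (k : ℕ) (A : ℕ → Mat n) : Matrix (Fin k × Fin n) (Fin k × Fin n) ℂ :=
  Matrix.of fun p q =>
    (if p.1 = q.1 then (if p.1.1 = 0 then A k else (1 : Mat n)) else 0) p.2 q.2

/-- `Y₁` (trailing coefficient of the first companion form `C₁(λ)`). -/
def C1Y (k : ℕ) (A : ℕ → Mat n) : Matrix (Fin k × Fin n) (Fin k × Fin n) ℂ :=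
  Matrix.of fun p q =>
    (if p.1.1 = 0 then -(A (k - 1 - q.1.1))
     else if p.1.1 = q.1.1 + 1 then (1 : Mat n) else 0) p.2 q.2

/-!
Write `D_q` for the `q`-th block of `Δ(δ)`. The `q`-th block row of `Δᴮ(δ) 𝒯₁ Δ(δ)`
collapses to `δ^(k-1-q) P_q(δ)`: for odd `q` only the coupling of `D_q` to the scalar
block `D_(q+1)` survives, and for even `q` the diagonal term `δ^(k-1-q) A_(k-q)` and the
coupling to `D_(q-1)` combine through Horner's recursion `P_q = δ P_(q-1) + A_(k-q)`.
Summing over `q` gives `P′(δ)`, since `δ^u A_(u+1)` occurs in exactly `u + 1` of the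
terms `δ^(k-1-q) P_q(δ)`. So `Δᴮ(δ) 𝒯₁ Δ(δ) = P′(δ)` as matrices.
-/

theorem sum_range_sum_range_sub_eq_sum_nsmul {M : Type*} [AddCommMonoid M] (g : ℕ → M) (k : ℕ) :
    ∑ i ∈ range k, ∑ j ∈ range (k - i), g (i + j) = ∑ u ∈ range k, (u + 1) • g u := by
  rw [← sum_range_diag_flip k fun i j => g (i + j)]
  refine sum_congr rfl fun u _ => ?_
  rw [sum_congr rfl fun j hj => by rw [Nat.add_sub_cancel' (Nat.lt_succ_iff.mp (mem_range.mp hj))],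
    sum_const, card_range]

theorem horner_zero (k : ℕ) (A : ℕ → Mat n) (lam : ℂ) : horner k A 0 lam = A k := by
  simp [horner]

theorem horner_succ {k i : ℕ} (hi : i < k) (A : ℕ → Mat n) (lam : ℂ) :
    horner k A (i + 1) lam = lam • horner k A i lam + A (k - (i + 1)) := by
  rw [horner, sum_range_succ', horner, smul_sum]
  simp only [pow_zero, one_smul, add_zero, smul_smul, ← pow_succ']
  congr 1
  refine sum_congr rfl fun j _ => ?_
  congr 2
  omega

theorem sum_pow_smul_horner (k : ℕ) (A : ℕ → Mat n) (lam : ℂ) :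
    ∑ i ∈ range k, lam ^ (k - 1 - i) • horner k A i lam = Pderiv k A lam := by
  rw [← sum_range_reflect (fun i => lam ^ (k - 1 - i) • horner k A i lam)]
  have hshift : ∀ i ∈ range k, lam ^ (k - 1 - (k - 1 - i)) • horner k A (k - 1 - i) lam
      = ∑ j ∈ range (k - i), lam ^ (i + j) • A (i + j + 1) := by
    intro i hi
    rw [mem_range] at hi
    rw [horner, smul_sum, show k - 1 - i + 1 = k - i by omega]
    refine sum_congr rfl fun j _ => ?_
    rw [smul_smul, ← pow_add, show k - 1 - (k - 1 - i) = i by omega,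
      show k - (k - 1 - i) + j = i + j + 1 by omega]
  rw [sum_congr rfl hshift, sum_range_sum_range_sub_eq_sum_nsmul fun u => lam ^ u • A (u + 1),
    Pderiv]
  refine sum_congr rfl fun u _ => ?_
  rw [mul_smul, ← Nat.cast_smul_eq_nsmul ℂ]
  push_cast
  rfl

section Blocks

variable {k : ℕ} (A : ℕ → Mat n) (lam : ℂ)

theorem deltaBlock_of_even {q : ℕ} (hq : q % 2 = 0) :
    DeltaBlock k A lam q = lam ^ ((k - 1 - q) / 2) • (1 : Mat n) :=
  if_pos hq

theorem deltaBlock_of_odd {q : ℕ} (hq : q % 2 = 1) :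
    DeltaBlock k A lam q = lam ^ ((k - q) / 2) • horner k A q lam :=
  if_neg (by omega)

theorem t1Block_of_odd {q : ℕ} (hq : q % 2 = 1) (p : ℕ) :
    T1Block k A q p = if p = q + 1 then 1 else 0 := by
  unfold T1Block
  split_ifs <;> first | rfl | omega

theorem t1Block_of_even {q : ℕ} (hq : q % 2 = 0) (p : ℕ) :
    T1Block k A q p = (if p = q then A (k - q) else 0) + if p + 1 = q then 1 else 0 := by
  unfold T1Block
  split_ifs <;> first | omega | simp

variable {A lam}

theorem sum_deltaBlock_mul_t1Block_mul (hk : Odd k) {q : ℕ} (hq : q < k) :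
    ∑ p ∈ range k, DeltaBlock k A lam q * T1Block k A q p * DeltaBlock k A lam p
      = lam ^ (k - 1 - q) • horner k A q lam := by
  have hk2 := Nat.odd_iff.mp hk
  rcases Nat.mod_two_eq_zero_or_one q with hq2 | hq2
  · simp only [t1Block_of_even A hq2, mul_add, add_mul, sum_add_distrib, mul_ite, ite_mul,
      mul_zero, zero_mul, Matrix.mul_one, sum_ite_eq', mem_range, if_pos hq]
    simp only [deltaBlock_of_even A lam hq2, smul_mul_assoc, mul_smul_comm, Matrix.one_mul,
      Matrix.mul_one, smul_smul, ← pow_add]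
    obtain _ | i := q
    · simp only [Nat.add_eq_zero_iff, one_ne_zero, and_false, if_false, sum_const_zero,
        add_zero, Nat.sub_zero, horner_zero]
      rw [show (k - 1) / 2 + (k - 1) / 2 = k - 1 by omega]
    · simp only [Nat.add_right_cancel_iff, sum_ite_eq', mem_range, if_pos (show i < k by omega)]
      rw [deltaBlock_of_odd A lam (by omega), smul_smul, ← pow_add, horner_succ (by omega),
        smul_add, smul_smul, ← pow_succ, add_comm,
        show (k - 1 - (i + 1)) / 2 + (k - 1 - (i + 1)) / 2 = k - 1 - (i + 1) by omega,
        show (k - 1 - (i + 1)) / 2 + (k - i) / 2 = k - 1 - (i + 1) + 1 by omega]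
  · simp only [t1Block_of_odd A hq2, mul_ite, ite_mul, mul_zero, zero_mul, Matrix.mul_one,
      sum_ite_eq', mem_range, if_pos (show q + 1 < k by omega)]
    rw [deltaBlock_of_odd A lam hq2, deltaBlock_of_even A lam (by omega), smul_mul_smul_comm,
      Matrix.mul_one, ← pow_add, show (k - q) / 2 + (k - 1 - (q + 1)) / 2 = k - 1 - q by omega]

end Blocks

theorem of_blockRow_mul_of_blocks_mul_of_blockCol {ι l m o R : Type*} [Fintype ι] [Fintype m]
    [Semiring R] (B : ι → Matrix l m R) (T : ι → ι → Matrix m m R) (C : ι → Matrix m o R) :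
    (of fun a (q : ι × m) => B q.1 a q.2) * (of fun (p q : ι × m) => T p.1 q.1 p.2 q.2) *
        (of fun (p : ι × m) b => C p.1 p.2 b)
      = ∑ q, ∑ p, B q * T q p * C p := by
  ext a b
  simp only [mul_apply, of_apply, Matrix.sum_apply, Fintype.sum_prod_type, sum_mul]
  exact (sum_congr rfl fun _ _ => sum_comm).trans sum_comm

theorem deltaB_mul_TT1_mul_delta {k : ℕ} (hk : Odd k) (A : ℕ → Mat n) (lam : ℂ) :
    DeltaB k A lam * TT1 k A * Delta k A lam = Pderiv k A lam := by
  rw [← sum_pow_smul_horner]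
  calc DeltaB k A lam * TT1 k A * Delta k A lam
      = ∑ q ∈ range k, ∑ p ∈ range k,
          DeltaBlock k A lam q * T1Block k A q p * DeltaBlock k A lam p := by
        simp only [Finset.sum_range]
        exact of_blockRow_mul_of_blocks_mul_of_blockCol (fun q : Fin k => DeltaBlock k A lam q)
          (fun q p : Fin k => T1Block k A q p) fun p : Fin k => DeltaBlock k A lam p
    _ = _ := sum_congr rfl fun q hq => sum_deltaBlock_mul_t1Block_mul hk (mem_range.mp hq)

theorem stmt_11_general {n k : ℕ} (hk : Odd k) (A : ℕ → Mat n)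
    (δ : ℂ) (x₁ x₂ : Fin n → ℂ) :
    star ((DeltaB k A δ)ᴴ *ᵥ x₁) ⬝ᵥ (TT1 k A *ᵥ (Delta k A δ *ᵥ x₂))
      = star x₁ ⬝ᵥ (Pderiv k A δ *ᵥ x₂) := by
  rw [star_mulVec, conjTranspose_conjTranspose, ← dotProduct_mulVec, mulVec_mulVec,
    mulVec_mulVec, deltaB_mul_TT1_mul_delta hk]

theorem stmt_11 {n k : ℕ} (hk : Odd k) (hk3 : 3 ≤ k) (A : ℕ → Mat n) (hAk : A k ≠ 0)
    (δ : ℂ) (x₁ x₂ : Fin n → ℂ)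
    (h1 : Matrix.vecMul (star x₁) (Peval k A δ) = 0)
    (h2 : Peval k A δ *ᵥ x₂ = 0) :
    star ((DeltaB k A δ)ᴴ *ᵥ x₁) ⬝ᵥ (TT1 k A *ᵥ (Delta k A δ *ᵥ x₂))
      = star x₁ ⬝ᵥ (Pderiv k A δ *ᵥ x₂) :=
  stmt_11_general hk A δ x₁ x₂

end MPoly
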